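/- For every variable z and every term M in Λ↑, one has db_z(‖nil ⊢ M‖) = db_z(M), where on the left db_z is the map from generalized de Bruijn terms to Λ↑ and on the right db_z is the map from Λ↑ to Λ↑. -/

import Mathlib

/-- Terms of Λ↑: variables, application, named abstraction, explicit weakening. -/
inductive Tm : Type
  | var : ℕ → Tm
  | app : Tm → Tm → Tm
  | lam : ℕ → Tm → Tm
  | up  : Tm → Tm

/-- Renaming functions: `swap y x` is `{yx}`, `lift F x` is `F_x`. -/
inductive Ren : Type
  | swap : ℕ → ℕ → Ren
  | lift : Ren → ℕ → Ren

/-- Action of a renaming function on a term. -/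
def Ren.apply : Ren → Tm → Tm
  | F, .app M N => .app (F.apply M) (F.apply N)
  | F, .lam x M => .lam x ((F.lift x).apply M)
  | .lift F _, .up M => .up (F.apply M)
  | .lift F x, .var z => if z = x then .var x else .up (F.apply (.var z))
  | .swap _ _, .up M => .up M
  | .swap y x, .var z => if z = x then .var y else .up (.var z)
termination_by F M => (sizeOf M, sizeOf F)

/-- Iterated lifting `F_Γ` for a context `Γ = y₁,…,yₙ` (the list `[y₁,…,yₙ]`):
lift by `y₁` first, then `y₂`, …, then `yₙ`. -/
def Ren.liftCtx (F : Ren) (Γ : List ℕ) : Ren := Γ.foldl Ren.lift F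

/-- Alpha-conversion: smallest compatible equivalence with `λx M =α λy {yx}M`. -/
inductive Alpha : Tm → Tm → Prop
  | refl (M) : Alpha M M
  | symm {M N} : Alpha M N → Alpha N M
  | trans {M N P} : Alpha M N → Alpha N P → Alpha M P
  | app {M₁ M₂ N₁ N₂} : Alpha M₁ M₂ → Alpha N₁ N₂ → Alpha (.app M₁ N₁) (.app M₂ N₂)
  | lam {M₁ M₂} (x) : Alpha M₁ M₂ → Alpha (.lam x M₁) (.lam x M₂)
  | up {M₁ M₂} : Alpha M₁ M₂ → Alpha (.up M₁) (.up M₂)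
  | rename (x y M) : Alpha (.lam x M) (.lam y ((Ren.swap y x).apply M))

/-- de Bruijn normalisation `db_z : Λ↑ → Λ↑`. -/
def db (z : ℕ) : Tm → Tm
  | .var x => .var x
  | .up M => .up (db z M)
  | .app M N => .app (db z M) (db z N)
  | .lam x M => .lam z ((Ren.swap z x).apply (db z M))
/-- Derivations of judgments `Γ ⊢ M`.  A context `Γ = y₁,…,yₙ` is the list
`[y₁,…,yₙ]` and `Γ,x` is `Γ ++ [x]`. -/
inductive Der : List ℕ → Tm → Type
  | varNil (x : ℕ) : Der [] (.var x)
  | varHere (Γ : List ℕ) (x : ℕ) : Der (Γ ++ [x]) (.var x)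
  | varThere {Γ : List ℕ} {x : ℕ} (z : ℕ) : z ≠ x → Der Γ (.var x) → Der (Γ ++ [z]) (.var x)
  | app {Γ M N} : Der Γ M → Der Γ N → Der Γ (.app M N)
  | upNil {M} : Der [] M → Der [] (.up M)
  | upCons {Γ M} (x : ℕ) : Der Γ M → Der (Γ ++ [x]) (.up M)
  | lam {Γ M} (x : ℕ) : Der (Γ ++ [x]) M → Der Γ (.lam x M)

/-- Generalized de Bruijn terms. -/
inductive Db : Type
  | var : ℕ → Db
  | one : Db
  | app : Db → Db → Db
  | lam : Db → Db
  | up  : Db → Db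

/-- Auxiliary translation, with the context given in *reversed* order
(head of the list is the last variable of the context). -/
def transAux : List ℕ → Tm → Db
  | Γ, .app M N => .app (transAux Γ M) (transAux Γ N)
  | Γ, .lam x M => .lam (transAux (x :: Γ) M)
  | [], .var x => .var x
  | y :: Γ, .var x => if y = x then .one else .up (transAux Γ (.var x))
  | [], .up M => .up (transAux [] M)
  | _ :: Γ, .up M => .up (transAux Γ M)
termination_by Γ M => (sizeOf M, Γ.length)

/-- The translation `‖Γ ⊢ M‖`, with `Γ = y₁,…,yₙ` given as the list `[y₁,…,yₙ]`. -/
def transl (Γ : List ℕ) (M : Tm) : Db := transAux Γ.reverse M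

/-- The map `db_z` from generalized de Bruijn terms back to `Λ↑`. -/
def dbD (z : ℕ) : Db → Tm
  | .var x => .var x
  | .one => .var z
  | .lam A => .lam z (dbD z A)
  | .app A B => .app (dbD z A) (dbD z B)
  | .up A => .up (dbD z A)

/-- The function `{z/Γ}`, with `Γ = y₁,…,yₙ` given as the list `[y₁,…,yₙ]`:
`{z/nil}M = M` and `{z/x,Δ}M = {z/Δ}({zx}_Δ M)`. -/
def subAll (z : ℕ) : List ℕ → Tm → Tm
  | [], M => M
  | x :: Δ, M => subAll z Δ (((Ren.swap z x).liftCtx Δ).apply M)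

/-! ### Auxiliary development for Statement 15 -/

/-- Iterated lifting where the *head* of the list is the **outermost** lift. -/
def myLift : Ren → List ℕ → Ren
  | F, [] => F
  | F, c :: K => (myLift F K).lift c

/-- Basic unfolding lemmas for `Ren.apply`. -/
lemma apply_app (F : Ren) (M N : Tm) :
    F.apply (.app M N) = .app (F.apply M) (F.apply N) := by
  rw [Ren.apply]

lemma apply_lam (F : Ren) (x : ℕ) (M : Tm) :
    F.apply (.lam x M) = .lam x ((F.lift x).apply M) := by
  rw [Ren.apply]

lemma lift_up (F : Ren) (x : ℕ) (M : Tm) :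
    (F.lift x).apply (.up M) = .up (F.apply M) := by
  rw [Ren.apply]

lemma lift_var (F : Ren) (x v : ℕ) :
    (F.lift x).apply (.var v) = if v = x then .var x else .up (F.apply (.var v)) := by
  rw [Ren.apply]

lemma swap_up (y x : ℕ) (M : Tm) : (Ren.swap y x).apply (.up M) = .up M := by
  rw [Ren.apply]

lemma swap_var (y x v : ℕ) :
    (Ren.swap y x).apply (.var v) = if v = x then .var y else .up (.var v) := by
  rw [Ren.apply]

/-- The composite renaming action corresponding to translation under a
(reversed) context `Δ`, with outer lift context `K`. -/
def W (z : ℕ) : List ℕ → List ℕ → Tm → Tm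
  | _, [], M => M
  | K, y :: Δ, M => (myLift (.swap z y) K).apply (W z (K ++ [y]) Δ M)

lemma W_app (z : ℕ) (A B : Tm) : ∀ (Δ K : List ℕ),
    W z K Δ (.app A B) = .app (W z K Δ A) (W z K Δ B) := by
  intro Δ
  induction Δ with
  | nil => intro K; rfl
  | cons y Δ ih => intro K; simp only [W, ih, apply_app]

lemma W_lam (z w : ℕ) (B : Tm) : ∀ (Δ K : List ℕ),
    W z K Δ (.lam w B) = .lam w (W z (w :: K) Δ B) := by
  intro Δ
  induction Δ with
  | nil => intro K; rfl
  | cons y Δ ih =>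
    intro K
    show (myLift (.swap z y) K).apply (W z (K ++ [y]) Δ (.lam w B)) = _
    rw [ih, apply_lam]
    rfl

lemma W_up1 (z c : ℕ) (T : Tm) : ∀ (Δ K : List ℕ),
    W z (c :: K) Δ (.up T) = .up (W z K Δ T) := by
  intro Δ
  induction Δ with
  | nil => intro K; rfl
  | cons y Δ ih =>
    intro K
    show (myLift (.swap z y) (c :: K)).apply (W z (c :: K ++ [y]) Δ (.up T)) = _
    rw [show (c :: K ++ [y] : List ℕ) = c :: (K ++ [y]) from rfl, ih]
    show ((myLift (.swap z y) K).lift c).apply _ = _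
    rw [lift_up]
    rfl

lemma W_up0 (z y : ℕ) (T : Tm) (Δ : List ℕ) :
    W z [] (y :: Δ) (.up T) = .up (W z [] Δ T) := by
  show (Ren.swap z y).apply (W z [y] Δ (.up T)) = _
  rw [W_up1, swap_up]

/-- Key commutation between a swap and lifted swaps. -/
lemma commLemma (z x y : ℕ) (L : List ℕ) : ∀ (N : Tm) (C : List ℕ),
    (myLift (.swap z y) (C ++ z :: L)).apply ((myLift (.swap z x) C).apply N)
      = (myLift (.swap z x) C).apply ((myLift (.swap z y) (C ++ x :: L)).apply N) := by
  intro N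
  induction N with
  | var v =>
    intro C
    induction C with
    | nil =>
      simp only [List.nil_append, myLift, swap_var]
      by_cases h : v = x
      · simp only [h, if_pos rfl]
        show ((myLift (.swap z y) L).lift z).apply (.var z)
            = (Ren.swap z x).apply (((myLift (.swap z y) L).lift x).apply (.var x))
        rw [lift_var, if_pos rfl, lift_var, if_pos rfl, swap_var, if_pos rfl]
      · simp only [if_neg h]
        show ((myLift (.swap z y) L).lift z).apply (.up (.var v))
            = (Ren.swap z x).apply (((myLift (.swap z y) L).lift x).apply (.var v))
        rw [lift_up, lift_var, if_neg h, swap_up]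
    | cons c C ihC =>
      show ((myLift (.swap z y) (C ++ z :: L)).lift c).apply
              (((myLift (.swap z x) C).lift c).apply (.var v)) = _
      rw [lift_var]
      by_cases h : v = c
      · rw [if_pos h, lift_var, if_pos rfl]
        show _ = ((myLift (.swap z x) C).lift c).apply
            (((myLift (.swap z y) (C ++ x :: L)).lift c).apply (.var v))
        rw [lift_var, if_pos h, lift_var, if_pos rfl]
      · rw [if_neg h, lift_up, ihC]
        show _ = ((myLift (.swap z x) C).lift c).apply
            (((myLift (.swap z y) (C ++ x :: L)).lift c).apply (.var v))
        rw [lift_var (myLift (.swap z y) (C ++ x :: L)), if_neg h, lift_up]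
  | app A B ihA ihB =>
    intro C
    simp only [apply_app, ihA, ihB]
  | lam w B ihB =>
    intro C
    simp only [apply_lam]
    have h1 : ((myLift (.swap z y) (C ++ z :: L)).lift w)
        = myLift (.swap z y) ((w :: C) ++ z :: L) := rfl
    have h2 : ((myLift (.swap z x) C).lift w) = myLift (.swap z x) (w :: C) := rfl
    have h3 : ((myLift (.swap z y) (C ++ x :: L)).lift w)
        = myLift (.swap z y) ((w :: C) ++ x :: L) := rfl
    rw [h1, h2, h3, ihB (w :: C)]
  | up M ihM =>
    intro C
    cases C with
    | nil =>
      simp only [List.nil_append, myLift, swap_up]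
      show ((myLift (.swap z y) L).lift z).apply (.up M)
          = (Ren.swap z x).apply (((myLift (.swap z y) L).lift x).apply (.up M))
      rw [lift_up, lift_up, swap_up]
    | cons c C =>
      show ((myLift (.swap z y) (C ++ z :: L)).lift c).apply
              (((myLift (.swap z x) C).lift c).apply (.up M)) = _
      rw [lift_up, lift_up, ihM C]
      show _ = ((myLift (.swap z x) C).lift c).apply
          (((myLift (.swap z y) (C ++ x :: L)).lift c).apply (.up M))
      rw [lift_up, lift_up]

lemma keyG (z x : ℕ) : ∀ (Δ L : List ℕ) (N : Tm),
    W z (z :: L) Δ ((Ren.swap z x).apply N)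
      = (Ren.swap z x).apply (W z (x :: L) Δ N) := by
  intro Δ
  induction Δ with
  | nil => intro L N; rfl
  | cons y Δ ih =>
    intro L N
    show (myLift (.swap z y) (z :: L)).apply (W z (z :: L ++ [y]) Δ ((Ren.swap z x).apply N)) = _
    rw [show (z :: L ++ [y] : List ℕ) = z :: (L ++ [y]) from rfl, ih (L ++ [y]) N]
    have hc := commLemma z x y L (W z (x :: (L ++ [y])) Δ N) []
    simp only [List.nil_append, myLift] at hc
    show ((myLift (.swap z y) L).lift z).apply
        ((Ren.swap z x).apply (W z (x :: (L ++ [y])) Δ N)) = _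
    rw [hc]
    rfl

/-- The value of the translation-then-`dbD` on a variable. -/
def vv (z : ℕ) : List ℕ → ℕ → Tm
  | [], x => .var x
  | y :: Δ, x => if y = x then .var z else .up (vv z Δ x)

def phi (z : ℕ) : List ℕ → List ℕ → ℕ → Tm
  | [], Δ, x => vv z Δ x
  | c :: K, Δ, x => if x = c then .var x else .up (phi z K Δ x)

lemma A_var (z y x : ℕ) : ∀ K : List ℕ,
    (myLift (.swap z y) K).apply (.var x) = phi z K [y] x := by
  intro K
  induction K with
  | nil =>
    show (Ren.swap z y).apply (.var x) = vv z [y] x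
    rw [swap_var]
    by_cases h : x = y
    · simp [vv, h]
    · simp [vv, Ne.symm h, h]
  | cons c K ih =>
    show ((myLift (.swap z y) K).lift c).apply (.var x) = _
    rw [lift_var]
    by_cases h : x = c
    · simp [phi, h]
    · simp only [if_neg h, ih]
      simp [phi, h]

lemma step (z : ℕ) (Δ' : List ℕ) (x y : ℕ) : ∀ K : List ℕ,
    (myLift (.swap z y) K).apply (phi z (K ++ [y]) Δ' x) = phi z K (y :: Δ') x := by
  intro K
  induction K with
  | nil =>
    show (Ren.swap z y).apply (phi z [y] Δ' x) = vv z (y :: Δ') x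
    by_cases h : x = y
    · subst h
      rw [show phi z [x] Δ' x = .var x from by simp [phi]]
      rw [swap_var, if_pos rfl]
      simp [vv]
    · rw [show phi z [y] Δ' x = .up (phi z [] Δ' x) from by simp [phi, h]]
      rw [swap_up]
      simp [vv, phi, Ne.symm h]
  | cons c K ih =>
    by_cases h : x = c
    · rw [show phi z ((c :: K) ++ [y]) Δ' x = .var x from by simp [phi, h]]
      show ((myLift (.swap z y) K).lift c).apply (.var x) = _
      rw [lift_var, if_pos h]
      simp [phi, h]
    · rw [show phi z ((c :: K) ++ [y]) Δ' x = .up (phi z (K ++ [y]) Δ' x) from by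
        simp [phi, h]]
      show ((myLift (.swap z y) K).lift c).apply (.up (phi z (K ++ [y]) Δ' x)) = _
      rw [lift_up, ih]
      simp [phi, h]

lemma W_var (z x : ℕ) : ∀ (Δ : List ℕ), Δ ≠ [] → ∀ K : List ℕ,
    W z K Δ (.var x) = phi z K Δ x := by
  intro Δ
  induction Δ with
  | nil => intro h; exact absurd rfl h
  | cons y Δ ih =>
    intro _ K
    show (myLift (.swap z y) K).apply (W z (K ++ [y]) Δ (.var x)) = _
    cases Δ with
    | nil =>
      show (myLift (.swap z y) K).apply (.var x) = _
      exact A_var z y x K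
    | cons y' Δ' =>
      rw [ih (by simp) (K ++ [y])]
      exact step z (y' :: Δ') x y K

lemma dbD_transAux_var (z x : ℕ) : ∀ Δ : List ℕ,
    dbD z (transAux Δ (.var x)) = vv z Δ x := by
  intro Δ
  induction Δ with
  | nil =>
    rw [show transAux [] (.var x) = .var x from by rw [transAux]]
    rfl
  | cons y Δ ih =>
    rw [show transAux (y :: Δ) (.var x) = if y = x then .one else .up (transAux Δ (.var x))
      from by rw [transAux]]
    by_cases h : y = x
    · simp [h, dbD, vv]
    · simp [h, dbD, vv, ih]

lemma main (z : ℕ) : ∀ (M : Tm) (Δ : List ℕ),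
    dbD z (transAux Δ M) = W z [] Δ (db z M) := by
  intro M
  induction M with
  | var x =>
    intro Δ
    cases Δ with
    | nil =>
      rw [dbD_transAux_var]
      rfl
    | cons y Δ =>
      rw [dbD_transAux_var, show db z (.var x) = Tm.var x from rfl,
        W_var z x (y :: Δ) (by simp) []]
      rfl
  | app A B ihA ihB =>
    intro Δ
    rw [show transAux Δ (.app A B) = .app (transAux Δ A) (transAux Δ B) from by rw [transAux]]
    show Tm.app (dbD z (transAux Δ A)) (dbD z (transAux Δ B)) = _
    rw [ihA, ihB, show db z (.app A B) = .app (db z A) (db z B) from rfl, W_app]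
  | lam x M ihM =>
    intro Δ
    rw [show transAux Δ (.lam x M) = .lam (transAux (x :: Δ) M) from by rw [transAux]]
    show Tm.lam z (dbD z (transAux (x :: Δ) M)) = _
    rw [ihM (x :: Δ)]
    show Tm.lam z ((Ren.swap z x).apply (W z [x] Δ (db z M))) = _
    rw [show db z (.lam x M) = .lam z ((Ren.swap z x).apply (db z M)) from rfl,
      W_lam, keyG z x Δ [] (db z M)]
  | up M ihM =>
    intro Δ
    cases Δ with
    | nil =>
      rw [show transAux [] (.up M) = .up (transAux [] M) from by rw [transAux]]
      show Tm.up (dbD z (transAux [] M)) = _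
      rw [ihM []]
      rfl
    | cons y Δ =>
      rw [show transAux (y :: Δ) (.up M) = .up (transAux Δ M) from by rw [transAux]]
      show Tm.up (dbD z (transAux Δ M)) = _
      rw [ihM Δ, show db z (.up M) = .up (db z M) from rfl, W_up0]

/-- `db_z(‖nil ⊢ M‖) = db_z(M)`. -/
theorem stmt15 (z : ℕ) (M : Tm) : dbD z (transl [] M) = db z M := by
  have := main z M []
  simpa [transl, W] using this
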